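/- arXiv:0904.1319 — 2 statements merged into one kernel-verified Lean document; each statement's English description precedes it below -/
import Mathlib

section
/- For any finite graph G and integers a ≥ 0, b ≥ 1, φ^a_b(M(G)) ≥ φ^{a+b}_{2b}(G), where M(G) is the Mycielskian of G. Consequently, for any positive integer t, φ^0_2(M^t(G)) ≥ φ^{2^{t+1}−2}_{2^{t+1}}(G). -/
/-!
An `(a,b)`-free colouring of `M(G)` restricts to the copy of `G`. The apex `z` lies on at most
`b` support edges; the remaining `n - a - b` or more project under `v'ᵢ ↦ vᵢ` to edges of `G`
supporting the restricted classes, and a vertex `v` of `G` lies on at most `2b` of them, namely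
those through `v` or `v'`. Iterating, `φ^a_b(Mᵗ(G)) ≥ φ^{a+(2ᵗ-1)b}_{2ᵗb}(G)`.
-/

open SimpleGraph

variable {V : Type*} {W : Type*}

/-- An independent set in a simple graph. -/
def IsIndep (G : SimpleGraph V) (s : Set V) : Prop :=
  ∀ ⦃u⦄, u ∈ s → ∀ ⦃v⦄, v ∈ s → ¬ G.Adj u v

/-- A maximal independent set. -/
def IsMaxIndep (G : SimpleGraph V) (s : Set V) : Prop :=
  IsIndep G s ∧ ∀ t : Set V, IsIndep G t → s ⊆ t → s = t

/-- A free independent set: an independent set contained in at least two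
distinct maximal independent sets. -/
def IsFreeIndep (G : SimpleGraph V) (s : Set V) : Prop :=
  IsIndep G s ∧ ∃ M₁ M₂ : Set V, IsMaxIndep G M₁ ∧ IsMaxIndep G M₂ ∧ M₁ ≠ M₂ ∧ s ⊆ M₁ ∧ s ⊆ M₂

/-- A free graph: every vertex lies in some free independent set. -/
def IsFreeGraph (G : SimpleGraph V) : Prop :=
  ∀ v : V, ∃ F : Set V, IsFreeIndep G F ∧ v ∈ F

/-- A partition of the vertices into `t` free independent sets. -/
def FreePartition (G : SimpleGraph V) (t : ℕ) : Prop :=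
  ∃ P : Fin t → Set V, (∀ i, IsFreeIndep G (P i)) ∧ ∀ v : V, ∃! i, v ∈ P i

/-- The free chromatic number `φ(G)` (`∞` if no free partition exists). -/
noncomputable def freeChrom (G : SimpleGraph V) : ℕ∞ :=
  sInf {t : ℕ∞ | ∃ n : ℕ, t = n ∧ FreePartition G n}

/-- The chromatic number as a natural number. -/
noncomputable def chromNum (G : SimpleGraph V) : ℕ :=
  sInf {k : ℕ | G.Colorable k}

/-- The circular complete graph `K_{n/d}`. -/
def circKG (n d : ℕ) : SimpleGraph (Fin n) where
  Adj i j := i ≠ j ∧ d ≤ ((i : ℤ) - (j : ℤ)).natAbs ∧ ((i : ℤ) - (j : ℤ)).natAbs ≤ n - d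
  symm := by
    constructor
    intro i j h
    obtain ⟨h1, h2, h3⟩ := h
    refine ⟨h1.symm, ?_, ?_⟩ <;> omega
  loopless := by constructor; intro i h; exact h.1 rfl

/-- The circular chromatic number, as a real number. -/
noncomputable def circChrom (G : SimpleGraph V) : ℝ :=
  sInf {x : ℝ | ∃ n d : ℕ, 0 < d ∧ Nat.gcd n d = 1 ∧ x = (n : ℝ) / d ∧
    Nonempty (G →g circKG n d)}

/-- The Mycielskian of a graph. -/
def mycielskian (G : SimpleGraph V) : SimpleGraph (Option (V ⊕ V)) where
  Adj x y := match x, y with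
    | some (Sum.inl u), some (Sum.inl v) => G.Adj u v
    | some (Sum.inl u), some (Sum.inr v) => G.Adj u v
    | some (Sum.inr u), some (Sum.inl v) => G.Adj u v
    | some (Sum.inr _), none => True
    | none, some (Sum.inr _) => True
    | _, _ => False
  symm := by
    constructor
    rintro (_ | (u | u)) (_ | (v | v)) h <;> simp_all <;> exact G.adj_symm h
  loopless := by
    constructor
    rintro (_ | (u | u)) h <;> simp_all

/-- Vertex type of the iterated Mycielskian. -/
def MycV (V : Type u) : ℕ → Type u
  | 0 => V
  | t + 1 => Option (MycV V t ⊕ MycV V t)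

/-- The `t`-fold iterated Mycielskian. -/
def mycIter (G : SimpleGraph V) : ∀ t : ℕ, SimpleGraph (MycV V t)
  | 0 => G
  | t + 1 => mycielskian (mycIter G t)

/-- The maximum size of a free independent set. -/
noncomputable def freeAlpha (G : SimpleGraph V) : ℕ :=
  sSup {k : ℕ | ∃ F : Set V, IsFreeIndep G F ∧ k = F.ncard}

/-- The independence number. -/
noncomputable def alphaNum (G : SimpleGraph V) : ℕ :=
  sSup {k : ℕ | ∃ S : Set V, IsIndep G S ∧ k = S.ncard}

/-- `d(G)`: the minimum over edges `uv` of `|N(u) ∪ N(v)|`. -/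
noncomputable def dMin (G : SimpleGraph V) : ℕ :=
  sInf {k : ℕ | ∃ u v : V, G.Adj u v ∧ k = (G.neighborSet u ∪ G.neighborSet v).ncard}

/-- An `(a,b)`-free coloring of `G` with `t` colors. -/
def ABFree (G : SimpleGraph V) (a b t : ℕ) : Prop :=
  ∃ (P : Fin t → Set V) (e : Fin (t - a) → V × V),
    (∀ v : V, ∃! i, v ∈ P i) ∧
    (∀ i, IsIndep G (P i)) ∧
    (∀ i : Fin (t - a), IsFreeIndep G (P (Fin.castLE (Nat.sub_le t a) i))) ∧
    (∀ i : Fin (t - a), G.Adj (e i).1 (e i).2 ∧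
      (G.neighborSet (e i).1 ∪ G.neighborSet (e i).2) ∩ P (Fin.castLE (Nat.sub_le t a) i) = ∅) ∧
    (∀ v : V, Set.ncard {i : Fin (t - a) | v = (e i).1 ∨ v = (e i).2} ≤ b)

/-- The `(a,b)`-free chromatic number `φ^a_b(G)`. -/
noncomputable def abFreeChrom (G : SimpleGraph V) (a b : ℕ) : ℕ∞ :=
  sInf {t : ℕ∞ | ∃ n : ℕ, t = n ∧ ABFree G a b n}

/-- The Kneser graph `KG(m,n)`. -/
def kneser (m n : ℕ) : SimpleGraph {A : Finset (Fin m) // A.card = n} where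
  Adj A B := A ≠ B ∧ Disjoint A.1 B.1
  symm := ⟨fun A B h => ⟨h.1.symm, h.2.symm⟩⟩
  loopless := ⟨fun A h => h.1 rfl⟩

/-- The generalized Kneser graph `KG(m,n,s)`. -/
def genKneser (m n s : ℕ) : SimpleGraph {A : Finset (Fin m) // A.card = n} where
  Adj A B := A ≠ B ∧ (A.1 ∩ B.1).card ≤ s
  symm := ⟨fun A B h => ⟨h.1.symm, by rw [Finset.inter_comm]; exact h.2⟩⟩
  loopless := ⟨fun A h => h.1 rfl⟩

/-- 2-stability of a subset of `[m]`. -/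
def TwoStable (m : ℕ) (A : Finset (Fin m)) : Prop :=
  ∀ x ∈ A, ∀ y ∈ A, x ≠ y →
    2 ≤ ((x : ℤ) - (y : ℤ)).natAbs ∧ ((x : ℤ) - (y : ℤ)).natAbs ≤ m - 2

/-- The Schrijver graph `SG(m,n)`. -/
def schrijver (m n : ℕ) :
    SimpleGraph {A : Finset (Fin m) // A.card = n ∧ TwoStable m A} where
  Adj A B := A ≠ B ∧ Disjoint A.1 B.1
  symm := ⟨fun A B h => ⟨h.1.symm, h.2.symm⟩⟩
  loopless := ⟨fun A h => h.1 rfl⟩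


lemma isIndep_sUnion_of_isChain {G : SimpleGraph V} {c : Set (Set V)}
    (hc : ∀ s ∈ c, IsIndep G s) (hchain : IsChain (· ⊆ ·) c) : IsIndep G (⋃₀ c) := by
  rintro u ⟨s, hs, hu⟩ v ⟨t, ht, hv⟩
  rcases hchain.total hs ht with hst | hts
  · exact hc t ht (hst hu) hv
  · exact hc s hs hu (hts hv)

lemma IsIndep.exists_isMaxIndep_superset {G : SimpleGraph V} {s : Set V} (hs : IsIndep G s) :
    ∃ M, s ⊆ M ∧ IsMaxIndep G M := by
  obtain ⟨M, hsM, hM⟩ := zorn_subset_nonempty {t | IsIndep G t}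
    (fun c hc hchain _ => ⟨⋃₀ c, isIndep_sUnion_of_isChain hc hchain,
      fun _ => Set.subset_sUnion_of_mem⟩) s hs
  exact ⟨M, hsM, hM.prop, fun t ht hMt => hMt.antisymm (hM.2 ht hMt)⟩

lemma IsIndep.insert {G : SimpleGraph V} {s : Set V} {x : V} (hs : IsIndep G s)
    (hx : ∀ w ∈ s, ¬ G.Adj x w) : IsIndep G (insert x s) := by
  rintro u (rfl | hu) v (rfl | hv) huv
  · exact G.loopless.irrefl _ huv
  · exact hx v hv huv
  · exact hx u hu huv.symm
  · exact hs hu hv huv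

/-- The maximal independent sets through `s ∪ {u}` and `s ∪ {v}` differ because `u ~ v`. -/
lemma IsIndep.isFreeIndep_of_supported {G : SimpleGraph V} {s : Set V} (hs : IsIndep G s)
    {u v : V} (huv : G.Adj u v) (hsupp : (G.neighborSet u ∪ G.neighborSet v) ∩ s = ∅) :
    IsFreeIndep G s := by
  have hsep : ∀ w ∈ s, ¬ G.Adj u w ∧ ¬ G.Adj v w := fun w hw =>
    ⟨fun h => hsupp.subset ⟨Or.inl h, hw⟩, fun h => hsupp.subset ⟨Or.inr h, hw⟩⟩
  obtain ⟨M₁, hsM₁, hM₁⟩ := (hs.insert fun w hw => (hsep w hw).1).exists_isMaxIndep_superset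
  obtain ⟨M₂, hsM₂, hM₂⟩ := (hs.insert fun w hw => (hsep w hw).2).exists_isMaxIndep_superset
  have hne : M₁ ≠ M₂ := by
    rintro rfl
    exact hM₁.1 (hsM₁ (Set.mem_insert u s)) (hsM₂ (Set.mem_insert v s)) huv
  exact ⟨hs, M₁, M₂, hM₁, hM₂, hne, (Set.subset_insert u s).trans hsM₁,
    (Set.subset_insert v s).trans hsM₂⟩

lemma Function.Embedding.exists_perm_comp_eq {α β : Type*} [Finite β] (f g : α ↪ β) :
    ∃ σ : Equiv.Perm β, ∀ x, σ (f x) = g x := by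
  classical
  let e : Set.range f ≃ Set.range g :=
    (Equiv.ofInjective f f.injective).symm.trans (Equiv.ofInjective g g.injective)
  refine ⟨e.extendSubtype, fun x => ?_⟩
  rw [Equiv.extendSubtype_apply_of_mem e (f x) ⟨x, rfl⟩]
  simp [e, Equiv.ofInjective_symm_apply]

/-- The `n - a` supported classes may be indexed by any type `κ` embedded in the colours:
a permutation of `Fin n` moves them to the front, as `ABFree` requires. -/
lemma ABFree.of_embedding {G : SimpleGraph V} {a b n : ℕ} {κ : Type*} (P : Fin n → Set V)
    (c : κ ↪ Fin n) (e : κ → V × V) (hκ : n - a ≤ Nat.card κ)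
    (hpart : ∀ v, ∃! i, v ∈ P i) (hind : ∀ i, IsIndep G (P i))
    (hadj : ∀ k, G.Adj (e k).1 (e k).2)
    (hsupp : ∀ k, (G.neighborSet (e k).1 ∪ G.neighborSet (e k).2) ∩ P (c k) = ∅)
    (hdeg : ∀ v, {k | v = (e k).1 ∨ v = (e k).2}.ncard ≤ b) :
    ABFree G a b n := by
  have : Finite κ := Finite.of_injective c c.injective
  have : Fintype κ := Fintype.ofFinite κ
  obtain ⟨d⟩ : Nonempty (Fin (n - a) ↪ κ) := Function.Embedding.nonempty_of_card_le
    (by rwa [Fintype.card_fin, ← Nat.card_eq_fintype_card])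
  obtain ⟨σ, hσ⟩ := (Fin.castLEEmb (Nat.sub_le n a)).exists_perm_comp_eq (d.trans c)
  simp only [Fin.coe_castLEEmb, Function.Embedding.trans_apply] at hσ
  refine ⟨fun i => P (σ i), fun j => e (d j), fun v => ?_, fun i => hind (σ i),
    fun j => ?_, fun j => ⟨hadj (d j), by beta_reduce; rw [hσ]; exact hsupp (d j)⟩, fun v => ?_⟩
  · obtain ⟨i, hi, huniq⟩ := hpart v
    exact ⟨σ.symm i, by simpa using hi, fun j hj => σ.eq_symm_apply.2 (huniq _ hj)⟩
  · beta_reduce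
    rw [hσ]
    exact (hind _).isFreeIndep_of_supported (hadj (d j)) (hsupp (d j))
  · exact (Set.ncard_le_ncard_of_injOn d (fun j hj => hj) d.injective.injOn).trans (hdeg v)

lemma Nat.card_sub_le_ncard_isSome_and_isSome {ι α : Type*} [Finite ι]
    (e : ι → Option α × Option α) {b : ℕ}
    (h : {i | none = (e i).1 ∨ none = (e i).2}.ncard ≤ b) :
    Nat.card ι - b ≤ {i | (e i).1.isSome ∧ (e i).2.isSome}.ncard := by
  have hcompl : {i | (e i).1.isSome ∧ (e i).2.isSome}ᶜ = {i | none = (e i).1 ∨ none = (e i).2} := by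
    ext i
    simp only [Set.mem_compl_iff, Set.mem_ofPred_eq, not_and_or, Option.not_isSome_iff_eq_none]
    exact or_congr eq_comm eq_comm
  have := Set.ncard_add_ncard_compl {i | (e i).1.isSome ∧ (e i).2.isSome}
  rw [hcompl] at this
  omega

/-- `vᵢ, v'ᵢ ↦ vᵢ` -/
def mycielskianBase : V ⊕ V → V := Sum.elim id id

lemma mycielskian_adj_some_some {G : SimpleGraph V} {x y : V ⊕ V}
    (h : (mycielskian G).Adj (some x) (some y)) :
    G.Adj (mycielskianBase x) (mycielskianBase y) := by
  rcases x with u | u <;> rcases y with w | w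
  exacts [h, h, h, h.elim]

lemma mycielskian_adj_some_inl {G : SimpleGraph V} {x : V ⊕ V} {w : V}
    (h : G.Adj (mycielskianBase x) w) : (mycielskian G).Adj (some x) (some (.inl w)) := by
  rcases x with u | u <;> exact h

lemma eq_some_inl_or_eq_some_inr_mycielskianBase_get {o : Option (V ⊕ V)} (h : o.isSome) :
    o = some (.inl (mycielskianBase (o.get h))) ∨ o = some (.inr (mycielskianBase (o.get h))) := by
  obtain ⟨x | x, rfl⟩ := Option.isSome_iff_exists.1 h <;> simp [mycielskianBase]

lemma ABFree.of_mycielskian {G : SimpleGraph V} {a b n : ℕ}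
    (h : ABFree (mycielskian G) a b n) : ABFree G (a + b) (2 * b) n := by
  obtain ⟨P, e, hpart, hind, -, hsupp, hdeg⟩ := h
  let good : Set (Fin (n - a)) := {i | ((e i).1.isSome ∧ (e i).2.isSome)}
  let lift (k : good) : V × V :=
    (mycielskianBase ((e k).1.get k.2.1), mycielskianBase ((e k).2.get k.2.2))
  have hlift (k : good) : e k = (some ((e k).1.get k.2.1), some ((e k).2.get k.2.2)) := by
    simp only [Option.some_get]
  have hcard : n - (a + b) ≤ Nat.card good := by
    have := Nat.card_sub_le_ncard_isSome_and_isSome e (hdeg none)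
    rwa [Nat.card_fin, Nat.sub_sub, ← Nat.card_coe_set_eq] at this
  refine ABFree.of_embedding (fun i => {v : V | some (Sum.inl v) ∈ P i})
    ((Function.Embedding.subtype _).trans (Fin.castLEEmb (Nat.sub_le n a))) lift hcard
    (fun v => hpart (some (.inl v))) (fun i u hu v hv => hind i hu hv) (fun k => ?_)
    (fun k => ?_) (fun v => ?_)
  · have := (hsupp k).1
    rw [hlift k] at this
    exact mycielskian_adj_some_some this
  · refine Set.eq_empty_of_forall_notMem fun w ⟨hw, hwP⟩ => ?_
    have hwM : some (.inl w) ∈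
        (mycielskian G).neighborSet (e k).1 ∪ (mycielskian G).neighborSet (e k).2 := by
      rw [hlift k]
      exact hw.imp mycielskian_adj_some_inl mycielskian_adj_some_inl
    exact (hsupp k).2.subset ⟨hwM, hwP⟩
  · calc {k : good | v = (lift k).1 ∨ v = (lift k).2}.ncard
        ≤ ({i | some (.inl v) = (e i).1 ∨ some (.inl v) = (e i).2} ∪
            {i | some (.inr v) = (e i).1 ∨ some (.inr v) = (e i).2}).ncard := by
          refine Set.ncard_le_ncard_of_injOn Subtype.val (fun k hk => ?_)
            Subtype.val_injective.injOn
          rcases hk with rfl | rfl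
          · rcases eq_some_inl_or_eq_some_inr_mycielskianBase_get k.2.1 with h | h
            exacts [Or.inl (Or.inl h.symm), Or.inr (Or.inl h.symm)]
          · rcases eq_some_inl_or_eq_some_inr_mycielskianBase_get k.2.2 with h | h
            exacts [Or.inl (Or.inr h.symm), Or.inr (Or.inr h.symm)]
      _ ≤ b + b := (Set.ncard_union_le _ _).trans (add_le_add (hdeg _) (hdeg _))
      _ = 2 * b := (two_mul b).symm

lemma abFreeChrom_le_mycielskian (G : SimpleGraph V) (a b : ℕ) :
    abFreeChrom G (a + b) (2 * b) ≤ abFreeChrom (mycielskian G) a b :=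
  sInf_le_sInf fun _ ⟨n, hn, h⟩ => ⟨n, hn, h.of_mycielskian⟩

lemma abFreeChrom_le_mycIter (G : SimpleGraph V) (t a b : ℕ) :
    abFreeChrom G (a + (2 ^ t - 1) * b) (2 ^ t * b) ≤ abFreeChrom (mycIter G t) a b := by
  induction t generalizing a b with
  | zero =>
    simp only [pow_zero, Nat.sub_self, zero_mul, add_zero, one_mul]
    exact le_rfl
  | succ t ih =>
    obtain ⟨p, hp⟩ := Nat.exists_eq_add_of_le' (Nat.one_le_two_pow (n := t))
    have hcoef : (2 ^ (t + 1) - 1) * b = b + (2 ^ t - 1) * (2 * b) := by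
      rw [pow_succ, hp, show (p + 1) * 2 - 1 = 2 * p + 1 by omega, Nat.add_sub_cancel]
      ring
    calc abFreeChrom G (a + (2 ^ (t + 1) - 1) * b) (2 ^ (t + 1) * b)
        = abFreeChrom G (a + b + (2 ^ t - 1) * (2 * b)) (2 ^ t * (2 * b)) := by
          rw [hcoef, add_assoc, pow_succ, mul_assoc]
      _ ≤ abFreeChrom (mycIter G t) (a + b) (2 * b) := ih _ _
      _ ≤ abFreeChrom (mycIter G (t + 1)) a b := abFreeChrom_le_mycielskian _ a b

theorem stmt13_general {V : Type*} (G : SimpleGraph V) :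
    (∀ a b : ℕ, 1 ≤ b →
        abFreeChrom G (a + b) (2 * b) ≤ abFreeChrom (mycielskian G) a b) ∧
      ∀ t : ℕ, 1 ≤ t →
        abFreeChrom G (2 ^ (t + 1) - 2) (2 ^ (t + 1)) ≤ abFreeChrom (mycIter G t) 0 2 := by
  refine ⟨fun a b _ => abFreeChrom_le_mycielskian G a b, fun t _ => ?_⟩
  have h := abFreeChrom_le_mycIter G t 0 2
  rwa [zero_add, Nat.sub_mul, one_mul, ← pow_succ] at h

/-- `φ^a_b(M(G)) ≥ φ^{a+b}_{2b}(G)` and consequently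
`φ^0_2(M^t(G)) ≥ φ^{2^{t+1}-2}_{2^{t+1}}(G)`. -/
theorem stmt13 {V : Type*} [Fintype V] (G : SimpleGraph V) :
    (∀ a b : ℕ, 1 ≤ b →
        abFreeChrom G (a + b) (2 * b) ≤ abFreeChrom (mycielskian G) a b) ∧
      ∀ t : ℕ, 1 ≤ t →
        abFreeChrom G (2 ^ (t + 1) - 2) (2 ^ (t + 1)) ≤ abFreeChrom (mycIter G t) 0 2 :=
  stmt13_general G
end

section
/- Let n > s ≥ 0 and m ≥ (s+2)(n−s). Every free independent set F of the generalized Kneser graph KG(m,n,s) satisfies |F| ≤ C(2n, s+2)·C(m−s−2, n−s−2). -/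
open SimpleGraph

variable {V : Type*} {W : Type*}

/-! If `F` is free, two distinct maximal independent sets `M₁ ⊇ F`, `M₂ ⊇ F` yield an edge `AB`
with `A ∈ M₁ \ M₂` and `B ∈ M₂`. In `KG(m,n,s)` every `C ∈ F` then shares more than `s` elements
with each of `A` and `B`, which share at most `s`, so `C` meets `A ∪ B` (at most `2n` elements) in
at least `s + 2` elements. Such `C` is the union of an `(s+2)`-subset of `A ∪ B` and an
`(n-s-2)`-subset of its complement, which gives the bound. -/

section Independence

variable {G : SimpleGraph V} {s t : Set V}

lemma IsIndep.mono (ht : IsIndep G t) (hst : s ⊆ t) : IsIndep G s :=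
  fun _ hu _ hv => ht (hst hu) (hst hv)

lemma IsMaxIndep.exists_adj_of_notMem (hs : IsMaxIndep G s) {a : V} (ha : a ∉ s) :
    ∃ b ∈ s, G.Adj a b := by
  by_contra! h
  have hins : IsIndep G (insert a s) := by
    rintro u (rfl | hu) v (rfl | hv) huv
    · exact G.loopless.irrefl _ huv
    · exact h v hv huv
    · exact h u hu huv.symm
    · exact hs.1 hu hv huv
  exact ha (hs.2 _ hins (Set.subset_insert a s) ▸ Set.mem_insert a s)

lemma IsFreeIndep.exists_adj_insert (hs : IsFreeIndep G s) :
    ∃ a b, G.Adj a b ∧ IsIndep G (insert a s) ∧ IsIndep G (insert b s) := by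
  obtain ⟨-, M₁, M₂, hM₁, hM₂, hne, hs₁, hs₂⟩ := hs
  obtain ⟨a, ha₁, ha₂⟩ := Set.not_subset.mp fun h => hne (hM₁.2 M₂ hM₂.1 h)
  obtain ⟨b, hb₂, hab⟩ := hM₂.exists_adj_of_notMem ha₂
  exact ⟨a, b, hab, hM₁.1.mono (Set.insert_subset ha₁ hs₁), hM₂.1.mono (Set.insert_subset hb₂ hs₂)⟩

end Independence

lemma Finset.add_two_le_card_inter_union {α : Type*} [DecidableEq α] {A B C : Finset α} {s : ℕ}
    (hAB : (A ∩ B).card ≤ s) (hA : s < (C ∩ A).card) (hB : s < (C ∩ B).card) :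
    s + 2 ≤ (C ∩ (A ∪ B)).card := by
  have hsub : (C ∩ A) ∩ (C ∩ B) ⊆ A ∩ B := fun x hx => by
    simp only [Finset.mem_inter] at hx ⊢
    exact ⟨hx.1.2, hx.2.2⟩
  have := Finset.card_union_add_card_inter (C ∩ A) (C ∩ B)
  have := Finset.card_le_card hsub
  rw [Finset.inter_union_distrib_left]
  omega

lemma Finset.ncard_le_choose_mul_choose_of_le_card_inter {α : Type*} [Fintype α] [DecidableEq α]
    {𝓕 : Set (Finset α)} {U : Finset α} {n t : ℕ} (hcard : ∀ C ∈ 𝓕, C.card = n)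
    (hU : ∀ C ∈ 𝓕, t ≤ (C ∩ U).card) :
    𝓕.ncard ≤ U.card.choose t * (Fintype.card α - t).choose (n - t) := by
  have hcover : 𝓕 ⊆ ((U.powersetCard t).biUnion fun T => (Tᶜ.powersetCard (n - t)).image (T ∪ ·) :
      Finset (Finset α)) := by
    intro C hC
    obtain ⟨T, hTC, hT⟩ := Finset.exists_subset_card_eq (hU C hC)
    have hTC' : T ⊆ C := hTC.trans Finset.inter_subset_left
    simp only [Finset.coe_biUnion, Finset.coe_image, Set.mem_iUnion, Set.mem_image,
      Finset.mem_coe, Finset.mem_powersetCard]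
    refine ⟨T, ⟨hTC.trans Finset.inter_subset_right, hT⟩, C \ T,
      ⟨fun x hx => Finset.mem_compl.mpr (Finset.mem_sdiff.mp hx).2, ?_⟩,
      Finset.union_sdiff_of_subset hTC'⟩
    rw [Finset.card_sdiff_of_subset hTC', hcard C hC, hT]
  refine (Set.ncard_le_ncard hcover (Finset.finite_toSet _)).trans ?_
  rw [Set.ncard_coe_finset, ← Finset.card_powersetCard]
  refine Finset.card_biUnion_le_card_mul _ _ _ fun T hT => Finset.card_image_le.trans ?_
  rw [Finset.card_powersetCard, Finset.card_compl, (Finset.mem_powersetCard.mp hT).2]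

section GenKneser

variable {m n s : ℕ} {F : Set {A : Finset (Fin m) // A.card = n}}
  {A B C : {A : Finset (Fin m) // A.card = n}}

lemma lt_card_inter_of_genKneser_adj_insert (hAB : (genKneser m n s).Adj A B)
    (hA : IsIndep (genKneser m n s) (insert A F)) (hB : IsIndep (genKneser m n s) (insert B F))
    (hC : C ∈ F) : s < (C.1 ∩ A.1).card := by
  by_contra! h
  have hCA : C ≠ A := by
    rintro rfl
    exact hB (Set.mem_insert_of_mem B hC) (Set.mem_insert B F) hAB
  exact hA (Set.mem_insert_of_mem A hC) (Set.mem_insert A F) ⟨hCA, h⟩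

lemma add_two_le_card_inter_union_of_genKneser_adj_insert (hAB : (genKneser m n s).Adj A B)
    (hA : IsIndep (genKneser m n s) (insert A F)) (hB : IsIndep (genKneser m n s) (insert B F))
    (hC : C ∈ F) : s + 2 ≤ (C.1 ∩ (A.1 ∪ B.1)).card :=
  Finset.add_two_le_card_inter_union hAB.2
    (lt_card_inter_of_genKneser_adj_insert hAB hA hB hC)
    (lt_card_inter_of_genKneser_adj_insert hAB.symm hB hA hC)

end GenKneser

theorem stmt18_general (m n s : ℕ)
    (F : Set {A : Finset (Fin m) // A.card = n}) (hF : IsFreeIndep (genKneser m n s) F) :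
    F.ncard ≤ Nat.choose (2 * n) (s + 2) * Nat.choose (m - s - 2) (n - s - 2) := by
  obtain ⟨A, B, hAB, hA, hB⟩ := hF.exists_adj_insert
  have hmeet : ∀ C ∈ Subtype.val '' F, s + 2 ≤ (C ∩ (A.1 ∪ B.1)).card := by
    rintro _ ⟨C, hC, rfl⟩
    exact add_two_le_card_inter_union_of_genKneser_adj_insert hAB hA hB hC
  have hunion : (A.1 ∪ B.1).card ≤ 2 * n :=
    (Finset.card_union_le _ _).trans (by rw [A.2, B.2, two_mul])
  calc F.ncard = (Subtype.val '' F).ncard :=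
        (Set.ncard_image_of_injective _ Subtype.val_injective).symm
    _ ≤ (A.1 ∪ B.1).card.choose (s + 2) * (m - (s + 2)).choose (n - (s + 2)) := by
      simpa using Finset.ncard_le_choose_mul_choose_of_le_card_inter
        (by rintro _ ⟨C, -, rfl⟩; exact C.2) hmeet
    _ ≤ _ := by
      rw [Nat.sub_sub, Nat.sub_sub]
      exact Nat.mul_le_mul_right _ (Nat.choose_le_choose _ hunion)

/-- every free independent set `F` of `KG(m,n,s)` with `m ≥ (s+2)(n-s)` has
`|F| ≤ C(2n, s+2)·C(m-s-2, n-s-2)`. -/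
theorem stmt18 (m n s : ℕ) (hs : s < n) (hm : (s + 2) * (n - s) ≤ m)
    (F : Set {A : Finset (Fin m) // A.card = n}) (hF : IsFreeIndep (genKneser m n s) F) :
    F.ncard ≤ Nat.choose (2 * n) (s + 2) * Nat.choose (m - s - 2) (n - s - 2) :=
  stmt18_general m n s F hF
end
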